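/- arXiv:2407.18791 — 6 statements merged into one kernel-verified Lean document; each statement's English description precedes it below -/
import Mathlib

section
/- Let J ∈ ℝ be a constant, I ⊆ ℝ a nonempty open interval, h : I → ℝ a function with h(t) > 0 for all t ∈ I, and a, b, α, H : I → ℝ differentiable functions satisfying the ODE system (S). If P1(J, a(t), b(t), α(t), H(t)) = 0 and P2(J, a(t), b(t), α(t), H(t)) = 0 for all t ∈ I, then b(t) = 0 for all t ∈ I. -/
namespace WEFE

noncomputable section

variable {R : Type*} [CommRing R]

/-- The polynomial P1 in the variables (J, a, b, α, H). -/
def P1 (J a b α H : R) : R :=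
  -(a*b^2*H) - 8*J^2*a*H - 4*J*a*H*α + 6*J*a^2*H + 2*J*a + a*H*α^2 - a^3*H
    + 2*a*α - 2*a^2 - 2*J*b^2*H + 2*b^2*H*α + 2*b^2 + 8*J^2*H*α - 2*J*H*α^2 - 2*J*α

/-- The polynomial P2 in the variables (J, a, b, α, H). -/
def P2 (J a b α H : R) : R :=
  -(8*J*a*H) + 2*a*H*α + a^2*H + 2*a + b^2*H + 12*J^2*H - 4*J*H*α - 3*J + α

/-- The polynomial P3 in the variables (J, a, b, α, H). -/
def P3 (J a b α H : R) : R :=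
  8*J*a*b^2*H - 11*a*b^2*H*α + 4*a^2*b^2*H - 22*a*b^2 - 96*J^3*a*H - 64*J^2*a*H*α
    + 108*J^2*a^2*H + 24*J^2*a + 6*J*a^2*H*α + 28*J*a*H*α^2 - 40*J*a^3*H + 30*J*a*α
    - 34*J*a^2 + a^3*H*α - 3*a^2*H*α^2 - 3*a*H*α^3 + 5*a^4*H - 6*a^2*α + 4*a*α^2
    + 10*a^3 - 36*J^2*b^2*H + 30*J*b^2*H*α + 30*J*b^2 - 3*b^2*H*α^2 - b^4*H + 2*b^2*α
    + 96*J^3*H*α - 44*J^2*H*α^2 - 24*J^2*α + 6*J*H*α^3 + 4*J*α^2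

/-- The polynomial P4 in the variables (J, a, b, α, H). -/
def P4 (J a b α H : R) : R :=
  -(a*b^2*H) - 24*J^2*a*H + 8*J*a*H*α + 8*J*a^2*H + 6*J*a - a*H*α^2 - a^2*H*α - a^3*H
    - 2*a^2 + b^2*H*α + 2*b^2 + 24*J^3*H - 12*J^2*H*α - 6*J^2 + 2*J*H*α^2 + 3*J*α - α^2

/-- The polynomial P5 in the variables (J, a, b, α, H). -/
def P5 (J a b α H : R) : R :=
  676*J^2*a*b^2*H - 514*J*a*b^2*H*α - 92*J*a^2*b^2*H - 900*J*a*b^2 + 94*a^2*b^2*H*α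
    + 51*a*b^2*H*α^2 - 20*a^3*b^2*H + 20*a*b^4*H + 12*a*b^2*α + 280*a^2*b^2
    - 1824*J^4*a*H - 1536*J^3*a*H*α + 2744*J^3*a^2*H + 456*J^3*a + 240*J^2*a^2*H*α
    + 1012*J^2*a*H*α^2 - 1564*J^2*a^3*H + 692*J^2*a*α - 840*J^2*a^2 + 70*J*a^3*H*α
    - 234*J*a^2*H*α^2 - 210*J*a*H*α^3 + 404*J*a^4*H - 246*J*a^2*α - 202*J*a*α^2
    + 460*J*a^3 - 17*a^4*H*α + 15*a^3*H*α^2 + 27*a^2*H*α^3 + 15*a*H*α^4 - 40*a^5*H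
    + 20*a^3*α + 46*a^2*α^2 + 14*a*α^3 - 80*a^4 - 840*J^3*b^2*H + 696*J^2*b^2*H*α
    + 672*J^2*b^2 - 138*J*b^2*H*α^2 - 16*J*b^4*H + 38*J*b^2*α + 9*b^2*H*α^3
    - 9*b^4*H*α - 18*b^2*α^2 - 24*b^4 + 1824*J^4*H*α - 1208*J^3*H*α^2 - 456*J^3*α
    + 312*J^2*H*α^3 + 148*J^2*α^2 - 30*J*H*α^4 - 12*J*α^3

/-- The polynomial P6 in the variables (J, a, b, α, H). -/
def P6 (J a b α H : R) : R :=
  -(7*a*b^2*H*α) + 4*a^2*b^2*H - 22*a*b^2 - 336*J^3*a*H + 160*J^2*a*H + 184*J^2*a^2*H*α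
    + 84*J^2*a - 36*J*a*H*α^2 - 48*J*a^2*H*α - 48*J*a^3*H - 12*J*a*α - 50*J*a^2
    + 3*a*H*α^3 + 5*a^2*H*α^2 + 5*a^3*H*α + 5*a^4*H + 2*a*α^2 + 2*a^2*α + 10*a^3
    - 24*J^2*b^2*H + 24*J*b^2*H*α + 38*J*b^2 - 3*b^2*H*α^2 - b^4*H - 2*b^2*α
    + 240*J^4*H - 168*J^3*H*α - 60*J^3 + 52*J^2*H*α^2 + 42*J^2*α - 6*J*H*α^3
    - 22*J*α^2 + 4*α^3

/-- The polynomial G = 16b⁸ + 8b⁶α² + b⁴α⁴. -/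
def G (J a b α H : R) : R :=
  16*b^8 + 8*b^6*α^2 + b^4*α^4

end

end WEFE

open WEFE

/-!
Because `h > 0`, the system (S) makes `(a, b, α, H)` a reparametrised integral curve of a
polynomial vector field `V`, so a polynomial vanishing along the curve on the open set `I` has
vanishing `V`-derivative there as well. Applied twice to `P1`, this gives `P3 - 8aα² = 0` and
`P5 = 0` along the curve. Over `ℚ`, `G = b⁴(4b² + α²)²` lies in the ideal generated by `P1`, `P2`,
`P3 - 8aα²` and `P5`, so `G` and hence `b` vanish.
-/

theorem Derivation.map_ofNat {R A M : Type*} [CommSemiring R] [CommSemiring A]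
    [AddCommMonoid M] [Algebra R A] [Module A M] [Module R M] (D : Derivation R A M) (n : ℕ)
    [n.AtLeastTwo] : D (no_index (OfNat.ofNat n : A)) = 0 := by
  rw [← Nat.cast_ofNat]
  exact D.map_natCast n

namespace MvPolynomial

variable {𝕜 σ : Type*} [NontriviallyNormedField 𝕜] (V : σ → MvPolynomial σ 𝕜) {x : 𝕜 → σ → 𝕜}

theorem hasDerivAt_eval_mkDerivation {c t : 𝕜}
    (hx : ∀ i, HasDerivAt (fun s ↦ x s i) (c * eval (x t) (V i)) t) (p : MvPolynomial σ 𝕜) :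
    HasDerivAt (fun s ↦ eval (x s) p) (c * eval (x t) (mkDerivation 𝕜 V p)) t := by
  induction p using MvPolynomial.induction_on with
  | C r => simpa using hasDerivAt_const t r
  | add p q hp hq => simpa only [map_add, mul_add] using hp.fun_add hq
  | mul_X p i hp =>
    simp only [map_mul, eval_X, Derivation.leibniz, mkDerivation_X, smul_eq_mul, map_add]
    exact (hp.fun_mul (hx i)).congr_deriv (by ring)

theorem eval_mkDerivation_eq_zero {c : 𝕜 → 𝕜} {I : Set 𝕜} (hI : IsOpen I)
    (hx : ∀ t ∈ I, ∀ i, HasDerivAt (fun s ↦ x s i) (c t * eval (x t) (V i)) t)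
    (hc : ∀ t ∈ I, c t ≠ 0) {p : MvPolynomial σ 𝕜} (hp : ∀ t ∈ I, eval (x t) p = 0) :
    ∀ t ∈ I, eval (x t) (mkDerivation 𝕜 V p) = 0 := by
  intro t ht
  have hzero : HasDerivAt (fun s ↦ eval (x s) p) 0 t :=
    (hasDerivAt_const t 0).congr_of_eventuallyEq (Filter.eventually_of_mem (hI.mem_nhds ht) hp)
  have hmul := (hasDerivAt_eval_mkDerivation V (hx t ht) p).unique hzero
  exact (mul_eq_zero.mp hmul).resolve_left (hc t ht)

end MvPolynomial

namespace WEFE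

open MvPolynomial

section DifferentialRing

variable {R A : Type*} [CommRing R] [CommRing A] [Algebra R A] {D : Derivation R A A}
  {J a b α H : A}

/-- The system (S) with the factor `h` divided out: `D` plays the role of `h⁻¹ d/dt`. -/
structure IsSystemS (D : Derivation R A A) (J a b α H : A) : Prop where
  deriv_J : D J = 0
  deriv_a : D a = b ^ 2 + ((6 * J - 2 * a - α) - a) * (a - 2 * J)
  deriv_b : D b = b * ((6 * J - 2 * a - α) + 2 * J - 2 * a)
  deriv_α : D α = ((6 * J - 2 * a - α) - α) * (α - 2 * J)
  deriv_H : D H = 2 * (1 - H * ((6 * J - 2 * a - α) - 2 * J))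

theorem IsSystemS.deriv_P1 (hS : IsSystemS D J a b α H) :
    D (P1 J a b α H) = P3 J a b α H - 8 * a * α ^ 2 := by
  simp only [P1, P3, map_add, map_sub, map_neg, Derivation.leibniz, Derivation.leibniz_pow,
    Derivation.map_ofNat, hS.deriv_J, hS.deriv_a, hS.deriv_b, hS.deriv_α, hS.deriv_H,
    smul_eq_mul, nsmul_eq_mul]
  ring

theorem IsSystemS.deriv_deriv_P1 (hS : IsSystemS D J a b α H) :
    D (D (P1 J a b α H)) = P5 J a b α H := by
  simp only [hS.deriv_P1, P3, P5, map_add, map_sub, Derivation.leibniz,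
    Derivation.leibniz_pow, Derivation.map_ofNat, hS.deriv_J, hS.deriv_a, hS.deriv_b,
    hS.deriv_α, hS.deriv_H, smul_eq_mul, nsmul_eq_mul]
  ring

end DifferentialRing

theorem G_eq_zero_of_P1_P2_P3_P5 {K : Type*} [Field K] [CharZero K] {J a b α H : K}
    (h1 : P1 J a b α H = 0) (h2 : P2 J a b α H = 0)
    (h3 : P3 J a b α H - 8 * a * α ^ 2 = 0) (h4 : P5 J a b α H = 0) : G J a b α H = 0 := by
  simp only [P1, P2, P3, P5] at h1 h2 h3 h4
  unfold G
  linear_combination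
    ((3/320) * a * α ^ 6 * H + (17/320) * a ^ 2 * α ^ 5 * H + (11/128) * a ^ 3 * α ^ 4 * H
    - (9/64) * J * a * α ^ 5 * H - (1/2) * J * a ^ 2 * α ^ 4 * H
    - (11/64) * J * a ^ 3 * α ^ 3 * H + (45/64) * J ^ 2 * a * α ^ 4 * H
    + (269/320) * J ^ 2 * a ^ 2 * α ^ 3 * H + (11/128) * J ^ 2 * a ^ 3 * α ^ 2 * H
    - (327/320) * J ^ 3 * a * α ^ 3 * H - (63/160) * J ^ 3 * a ^ 2 * α ^ 2 * H
    + (9/20) * J ^ 4 * a * α ^ 2 * H + (1/5) * b ^ 2 * α ^ 5 * H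
    + (2173/1920) * a * b ^ 2 * α ^ 4 * H + (141/80) * a ^ 2 * b ^ 2 * α ^ 3 * H
    - (11/96) * a ^ 3 * b ^ 2 * α ^ 2 * H - (233/80) * J * b ^ 2 * α ^ 4 * H
    - (1873/192) * J * a * b ^ 2 * α ^ 3 * H - (25/32) * J * a ^ 2 * b ^ 2 * α ^ 2 * H
    + (121/48) * J * a ^ 3 * b ^ 2 * α * H + (551/40) * J ^ 2 * b ^ 2 * α ^ 3 * H
    + (6143/640) * J ^ 2 * a * b ^ 2 * α ^ 2 * H - (1683/160) * J ^ 2 * a ^ 2 * b ^ 2 * α * H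
    - (1317/80) * J ^ 3 * b ^ 2 * α ^ 2 * H + (339/40) * J ^ 3 * a * b ^ 2 * α * H
    + (27/5) * J ^ 4 * b ^ 2 * α * H - (17/30) * b ^ 4 * α ^ 3 * H - (69/640) * a * α ^ 5
    - (2183/480) * a * b ^ 4 * α ^ 2 * H - (383/960) * a ^ 2 * α ^ 4
    - (22/3) * a ^ 2 * b ^ 4 * α * H + (1/15) * a ^ 3 * α ^ 3 + (5/12) * a ^ 4 * α ^ 2
    + (6401/480) * J * b ^ 4 * α ^ 2 * H + (509/384) * J * a * α ^ 4
    + (12629/240) * J * a * b ^ 4 * α * H + (791/480) * J * a ^ 2 * α ^ 3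
    + (121/4) * J * a ^ 2 * b ^ 4 * H - (151/80) * J * a ^ 3 * α ^ 2
    - (12987/160) * J ^ 2 * b ^ 4 * α * H - (2691/640) * J ^ 2 * a * α ^ 3
    - (693/5) * J ^ 2 * a * b ^ 4 * H + (303/320) * J ^ 2 * a ^ 2 * α ^ 2
    + (792/5) * J ^ 3 * b ^ 4 * H + (1629/640) * J ^ 3 * a * α ^ 2 - (31/15) * b ^ 2 * α ^ 4
    - (14/15) * b ^ 6 * α * H - (1497/160) * a * b ^ 2 * α ^ 3
    - (1811/240) * a ^ 2 * b ^ 2 * α ^ 2 - (13/3) * a ^ 3 * b ^ 2 * α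
    + (11933/480) * J * b ^ 2 * α ^ 3 + (77/20) * J * b ^ 6 * H
    + (4693/96) * J * a * b ^ 2 * α ^ 2 + (1871/120) * J * a ^ 2 * b ^ 2 * α
    - (5937/80) * J ^ 2 * b ^ 2 * α ^ 2 - (219/8) * J ^ 2 * a * b ^ 2 * α
    + (4887/160) * J ^ 3 * b ^ 2 * α - (127/12) * b ^ 4 * α ^ 2 - (263/5) * a * b ^ 4 * α
    - 112 * a ^ 2 * b ^ 4 + (1109/10) * J * b ^ 4 * α + (4589/10) * J * a * b ^ 4
    - (9297/20) * J ^ 2 * b ^ 4 - (92/5) * b ^ 6) * h1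
    + ((7/640) * a ^ 2 * α ^ 6 * H - (3/160) * a ^ 3 * α ^ 5 * H + (1/128) * a ^ 4 * α ^ 4 * H
    - (7/320) * J * a * α ^ 6 * H + (3/320) * J * a ^ 2 * α ^ 5 * H
    + (9/320) * J * a ^ 3 * α ^ 4 * H - (1/64) * J * a ^ 4 * α ^ 3 * H
    + (9/160) * J ^ 2 * a * α ^ 5 * H - (41/640) * J ^ 2 * a ^ 2 * α ^ 4 * H
    + (1/128) * J ^ 2 * a ^ 4 * α ^ 2 * H - (3/64) * J ^ 3 * a * α ^ 4 * H
    + (9/160) * J ^ 3 * a ^ 2 * α ^ 3 * H - (3/320) * J ^ 3 * a ^ 3 * α ^ 2 * H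
    + (1/80) * J ^ 4 * a * α ^ 3 * H - (1/80) * J ^ 4 * a ^ 2 * α ^ 2 * H
    + (227/960) * a * b ^ 2 * α ^ 5 * H - (781/1920) * a ^ 2 * b ^ 2 * α ^ 4 * H
    + (23/120) * a ^ 3 * b ^ 2 * α ^ 3 * H - (1/96) * a ^ 4 * b ^ 2 * α ^ 2 * H
    - (7/15) * J * b ^ 2 * α ^ 5 * H + (97/320) * J * a * b ^ 2 * α ^ 4 * H
    + (661/960) * J * a ^ 2 * b ^ 2 * α ^ 3 * H - (383/480) * J * a ^ 3 * b ^ 2 * α ^ 2 * H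
    + (11/48) * J * a ^ 4 * b ^ 2 * α * H + (239/240) * J ^ 2 * b ^ 2 * α ^ 4 * H
    - (1717/960) * J ^ 2 * a * b ^ 2 * α ^ 3 * H
    + (395/384) * J ^ 2 * a ^ 2 * b ^ 2 * α ^ 2 * H - (29/160) * J ^ 2 * a ^ 3 * b ^ 2 * α * H
    - (163/240) * J ^ 3 * b ^ 2 * α ^ 3 * H + (1091/960) * J ^ 3 * a * b ^ 2 * α ^ 2 * H
    - (23/48) * J ^ 3 * a ^ 2 * b ^ 2 * α * H + (3/20) * J ^ 4 * b ^ 2 * α ^ 2 * H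
    - (3/20) * J ^ 4 * a * b ^ 2 * α * H + (1/15) * b ^ 4 * α ^ 4 * H
    - (37/48) * a * b ^ 4 * α ^ 3 * H - (17/960) * a ^ 2 * α ^ 5
    + (763/480) * a ^ 2 * b ^ 4 * α ^ 2 * H + (49/960) * a ^ 3 * α ^ 4
    - (2/3) * a ^ 3 * b ^ 4 * α * H - (1/30) * a ^ 4 * α ^ 3
    + (311/240) * J * b ^ 4 * α ^ 3 * H + (49/960) * J * a * α ^ 5
    + (167/160) * J * a * b ^ 4 * α ^ 2 * H - (17/192) * J * a ^ 2 * α ^ 4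
    - (1337/240) * J * a ^ 2 * b ^ 4 * α * H - (7/240) * J * a ^ 3 * α ^ 3
    + (11/4) * J * a ^ 3 * b ^ 4 * H + (1/15) * J * a ^ 4 * α ^ 2
    - 8 * J ^ 2 * b ^ 4 * α ^ 2 * H - (29/240) * J ^ 2 * a * α ^ 4
    + (1843/160) * J ^ 2 * a * b ^ 4 * α * H + (241/960) * J ^ 2 * a ^ 2 * α ^ 3
    - (33/10) * J ^ 2 * a ^ 2 * b ^ 4 * H - (25/192) * J ^ 2 * a ^ 3 * α ^ 2
    + (331/80) * J ^ 3 * b ^ 4 * α * H + (17/320) * J ^ 3 * a * α ^ 3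
    - (22/5) * J ^ 3 * a * b ^ 4 * H - (17/320) * J ^ 3 * a ^ 2 * α ^ 2
    - (4/15) * b ^ 6 * α ^ 2 * H - (29/192) * a * b ^ 2 * α ^ 4 - (2/3) * a * b ^ 6 * α * H
    - (39/80) * a ^ 2 * b ^ 2 * α ^ 3 + (397/240) * a ^ 3 * b ^ 2 * α ^ 2
    - a ^ 4 * b ^ 2 * α + (14/15) * J * b ^ 2 * α ^ 4 + (89/30) * J * b ^ 6 * α * H
    - (23/60) * J * a * b ^ 2 * α ^ 3 + (11/4) * J * a * b ^ 6 * H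
    - (133/60) * J * a ^ 2 * b ^ 2 * α ^ 2 + (203/120) * J * a ^ 3 * b ^ 2 * α
    - (467/240) * J ^ 2 * b ^ 2 * α ^ 3 - (77/10) * J ^ 2 * b ^ 6 * H
    + (2497/960) * J ^ 2 * a * b ^ 2 * α ^ 2 - (173/240) * J ^ 2 * a ^ 2 * b ^ 2 * α
    + (51/80) * J ^ 3 * b ^ 2 * α ^ 2 - (51/80) * J ^ 3 * a * b ^ 2 * α
    + (58/15) * b ^ 4 * α ^ 3 - (1551/80) * a * b ^ 4 * α ^ 2 + (269/10) * a ^ 2 * b ^ 4 * α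
    - 12 * a ^ 3 * b ^ 4 + (1241/80) * J * b ^ 4 * α ^ 2 - (961/40) * J * a * b ^ 4 * α
    + (107/10) * J * a ^ 2 * b ^ 4 - (871/80) * J ^ 2 * b ^ 4 * α
    + (101/10) * J ^ 2 * a * b ^ 4 + (133/30) * b ^ 6 * α - 12 * a * b ^ 6
    + (153/10) * J * b ^ 6) * h2
    + ((7/640) * a * α ^ 5 * H + (9/320) * a ^ 2 * α ^ 4 * H - (29/320) * J * a * α ^ 4 * H
    - (9/160) * J * a ^ 2 * α ^ 3 * H + (19/128) * J ^ 2 * a * α ^ 3 * H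
    + (9/320) * J ^ 2 * a ^ 2 * α ^ 2 * H - (11/160) * J ^ 3 * a * α ^ 2 * H
    + (7/30) * b ^ 2 * α ^ 4 * H + (281/480) * a * b ^ 2 * α ^ 3 * H
    - (3/80) * a ^ 2 * b ^ 2 * α ^ 2 * H - (293/160) * J * b ^ 2 * α ^ 3 * H
    - (21/40) * J * a * b ^ 2 * α ^ 2 * H + (33/40) * J * a ^ 2 * b ^ 2 * α * H
    + (1163/480) * J ^ 2 * b ^ 2 * α ^ 2 * H - (403/240) * J ^ 2 * a * b ^ 2 * α * H
    - (33/40) * J ^ 3 * b ^ 2 * α * H - (14/15) * b ^ 4 * α ^ 2 * H - (7/60) * a * α ^ 4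
    - (12/5) * a * b ^ 4 * α * H - (1/10) * a ^ 2 * α ^ 3 + (13/60) * a ^ 3 * α ^ 2
    + (583/60) * J * b ^ 4 * α * H + (329/480) * J * a * α ^ 3 + (99/10) * J * a * b ^ 4 * H
    - (97/240) * J * a ^ 2 * α ^ 2 - (121/5) * J ^ 2 * b ^ 4 * H - (73/160) * J ^ 2 * a * α ^ 2
    - (133/60) * b ^ 2 * α ^ 3 - (23/6) * a * b ^ 2 * α ^ 2 - (8/15) * a ^ 2 * b ^ 2 * α
    + (749/60) * J * b ^ 2 * α ^ 2 + (59/30) * J * a * b ^ 2 * α - (219/40) * J ^ 2 * b ^ 2 * α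
    - (337/30) * b ^ 4 * α - (188/5) * a * b ^ 4 + (409/5) * J * b ^ 4) * h3
    + ((1/640) * a * α ^ 4 * H - (1/320) * J * a * α ^ 3 * H + (1/640) * J ^ 2 * a * α ^ 2 * H
    + (1/30) * b ^ 2 * α ^ 3 * H - (1/480) * a * b ^ 2 * α ^ 2 * H
    - (5/96) * J * b ^ 2 * α ^ 2 * H + (11/240) * J * a * b ^ 2 * α * H
    + (3/160) * J ^ 2 * b ^ 2 * α * H - (2/15) * b ^ 4 * α * H - (1/60) * a * α ^ 3
    + (1/60) * a ^ 2 * α ^ 2 + (11/20) * J * b ^ 4 * H + (1/80) * J * a * α ^ 2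
    - (19/60) * b ^ 2 * α ^ 2 + (1/60) * a * b ^ 2 * α + (3/20) * J * b ^ 2 * α
    - (11/5) * b ^ 4) * h4

theorem G_eq_zero_iff {K : Type*} [CommRing K] [LinearOrder K] [IsStrictOrderedRing K]
    {J a b α H : K} : G J a b α H = 0 ↔ b = 0 := by
  have hG : G J a b α H = b ^ 4 * (4 * b ^ 2 + α ^ 2) ^ 2 := by unfold G; ring
  rw [hG]
  constructor
  · intro h
    rcases mul_eq_zero.mp h with hb | hsum
    · exact pow_eq_zero_iff four_ne_zero |>.mp hb
    · have hb2 : b ^ 2 = 0 := by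
        nlinarith [sq_nonneg b, sq_nonneg α, pow_eq_zero_iff two_ne_zero |>.mp hsum]
      exact pow_eq_zero_iff two_ne_zero |>.mp hb2
  · rintro rfl
    ring

/-- The right-hand sides of (S) without `h`; `X 0, X 1, X 2, X 3` stand for `a, b, α, H`. -/
noncomputable def vectorFieldS {R : Type*} [CommRing R] (J : R) :
    Fin 4 → MvPolynomial (Fin 4) R :=
  ![X 1 ^ 2 + ((6 * C J - 2 * X 0 - X 2) - X 0) * (X 0 - 2 * C J),
    X 1 * ((6 * C J - 2 * X 0 - X 2) + 2 * C J - 2 * X 0),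
    ((6 * C J - 2 * X 0 - X 2) - X 2) * (X 2 - 2 * C J),
    2 * (1 - X 3 * ((6 * C J - 2 * X 0 - X 2) - 2 * C J))]

theorem isSystemS_mkDerivation_vectorFieldS {R : Type*} [CommRing R] (J : R) :
    IsSystemS (mkDerivation R (vectorFieldS J)) (C J) (X 0) (X 1) (X 2) (X 3) where
  deriv_J := derivation_C _ J
  deriv_a := mkDerivation_X _ _ _
  deriv_b := mkDerivation_X _ _ _
  deriv_α := mkDerivation_X _ _ _
  deriv_H := mkDerivation_X _ _ _

end WEFE

theorem b_vanishes_of_P1_P2_general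
    (J : ℝ) (I : Set ℝ) (hIopen : IsOpen I)
    (h a b α H : ℝ → ℝ) (hpos : ∀ t ∈ I, 0 < h t)
    (hda : ∀ t ∈ I, HasDerivAt a
      (h t * ((b t) ^ 2 + ((6 * J - 2 * a t - α t) - a t) * (a t - 2 * J))) t)
    (hdb : ∀ t ∈ I, HasDerivAt b
      (h t * b t * ((6 * J - 2 * a t - α t) + 2 * J - 2 * a t)) t)
    (hdα : ∀ t ∈ I, HasDerivAt α
      (h t * ((6 * J - 2 * a t - α t) - α t) * (α t - 2 * J)) t)
    (hdH : ∀ t ∈ I, HasDerivAt H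
      (2 * h t * (1 - H t * ((6 * J - 2 * a t - α t) - 2 * J))) t)
    (hP1 : ∀ t ∈ I, P1 J (a t) (b t) (α t) (H t) = 0)
    (hP2 : ∀ t ∈ I, P2 J (a t) (b t) (α t) (H t) = 0) :
    ∀ t ∈ I, b t = 0 := by
  let x : ℝ → Fin 4 → ℝ := fun s ↦ ![a s, b s, α s, H s]
  have hx : ∀ t ∈ I, ∀ i,
      HasDerivAt (fun s ↦ x s i) (h t * MvPolynomial.eval (x t) (vectorFieldS J i)) t := by
    intro t ht i
    fin_cases i
    · exact (hda t ht).congr_deriv (by simp [x, vectorFieldS])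
    · exact (hdb t ht).congr_deriv (by simp [x, vectorFieldS, mul_assoc])
    · exact (hdα t ht).congr_deriv (by simp [x, vectorFieldS, mul_assoc])
    · exact (hdH t ht).congr_deriv (by simp [x, vectorFieldS, mul_assoc, mul_left_comm])
  have hne : ∀ t ∈ I, h t ≠ 0 := fun t ht ↦ (hpos t ht).ne'
  have hS := isSystemS_mkDerivation_vectorFieldS J
  have hDP1 := MvPolynomial.eval_mkDerivation_eq_zero _ hIopen hx hne
    (p := P1 (.C J) (.X 0) (.X 1) (.X 2) (.X 3)) (by simpa [x, P1] using hP1)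
  have hDDP1 := MvPolynomial.eval_mkDerivation_eq_zero _ hIopen hx hne hDP1
  rw [hS.deriv_P1] at hDP1
  rw [hS.deriv_deriv_P1] at hDDP1
  intro t ht
  have hP3 : P3 J (a t) (b t) (α t) (H t) - 8 * a t * α t ^ 2 = 0 := by
    simpa [x, P3] using hDP1 t ht
  have hP5 : P5 J (a t) (b t) (α t) (H t) = 0 := by simpa [x, P5] using hDDP1 t ht
  exact G_eq_zero_iff.mp (G_eq_zero_of_P1_P2_P3_P5 (hP1 t ht) (hP2 t ht) hP3 hP5)

/-- If differentiable functions a, b, α, H on a nonempty open interval I satisfy the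
ODE system (S) (with λ = 6J − 2a − α, h > 0 on I), and the polynomial constraints
P1 = P2 = 0 hold along (J, a, b, α, H) on I, then b ≡ 0 on I. -/
theorem b_vanishes_of_P1_P2
    (J : ℝ) (I : Set ℝ) (hIopen : IsOpen I) (hIne : I.Nonempty) (hIconn : I.OrdConnected)
    (h a b α H : ℝ → ℝ) (hpos : ∀ t ∈ I, 0 < h t)
    (hda : ∀ t ∈ I, HasDerivAt a
      (h t * ((b t) ^ 2 + ((6 * J - 2 * a t - α t) - a t) * (a t - 2 * J))) t)
    (hdb : ∀ t ∈ I, HasDerivAt b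
      (h t * b t * ((6 * J - 2 * a t - α t) + 2 * J - 2 * a t)) t)
    (hdα : ∀ t ∈ I, HasDerivAt α
      (h t * ((6 * J - 2 * a t - α t) - α t) * (α t - 2 * J)) t)
    (hdH : ∀ t ∈ I, HasDerivAt H
      (2 * h t * (1 - H t * ((6 * J - 2 * a t - α t) - 2 * J))) t)
    (hP1 : ∀ t ∈ I, P1 J (a t) (b t) (α t) (H t) = 0)
    (hP2 : ∀ t ∈ I, P2 J (a t) (b t) (α t) (H t) = 0) :
    ∀ t ∈ I, b t = 0 :=
  b_vanishes_of_P1_P2_general J I hIopen h a b α H hpos hda hdb hdα hdH hP1 hP2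
end

section
/- There do not exist a nonempty open interval I ⊆ ℝ, a constant J ∈ ℝ, differentiable functions b, H : I → ℝ and a function h : I → ℝ such that h(t) > 0 and H(t) ≠ 0 for all t ∈ I, and such that, setting a(t) := 2(J·H(t) − 1)/H(t), the following hold for all t ∈ I: b'(t) = h(t)·b(t)·(8J − 5a(t)), H'(t) = 2h(t)·(1 − H(t)·(4J − 3a(t))), and b(t)²·H(t) + 6/H(t) + 3J = 0. -/
/-! Along the interval the constraint `b²H + 6/H + 3J` vanishes identically, so its derivative
vanishes too. Substituting the ODEs, that derivative is `2h(5b²H² − 12JH + 30)/H²`, and since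
`h > 0` this gives `5b²H² − 12JH + 30 = 0`. Eliminating `JH` with the constraint itself,
`b²H² + 6 + 3JH = 0`, leaves `(bH)² = −6`, which is absurd. -/

open Filter Topology

theorem HasDerivAt.sq_mul_add_div_add {b H : ℝ → ℝ} {b' H' t : ℝ} (c k : ℝ)
    (hb : HasDerivAt b b' t) (hH : HasDerivAt H H' t) (hH₀ : H t ≠ 0) :
    HasDerivAt (fun s => b s ^ 2 * H s + c / H s + k)
      (2 * b t * b' * H t + b t ^ 2 * H' - c * H' / H t ^ 2) t := by
  refine ((((hb.fun_pow 2).fun_mul hH).fun_add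
    ((hasDerivAt_const t c).fun_div hH hH₀)).add_const k).congr_deriv ?_
  norm_num
  ring

theorem constraint_deriv_eq {B H h J : ℝ} (hH : H ≠ 0) :
    2 * B * (h * B * (8 * J - 5 * (2 * (J * H - 1) / H))) * H
        + B ^ 2 * (2 * h * (1 - H * (4 * J - 3 * (2 * (J * H - 1) / H))))
        - 6 * (2 * h * (1 - H * (4 * J - 3 * (2 * (J * H - 1) / H)))) / H ^ 2
      = 2 * h * (5 * B ^ 2 * H ^ 2 - 12 * J * H + 30) / H ^ 2 := by
  field_simp
  ring

theorem sq_mul_eq_neg_six {B H J : ℝ} (hH : H ≠ 0) (hcon : B ^ 2 * H + 6 / H + 3 * J = 0)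
    (hderiv : 5 * B ^ 2 * H ^ 2 - 12 * J * H + 30 = 0) : (B * H) ^ 2 = -6 := by
  have hcon' : B ^ 2 * H ^ 2 + 6 + 3 * J * H = 0 := by
    field_simp at hcon
    linarith
  linear_combination (4 * hcon' + hderiv) / 9

/-- There is no nonempty open interval I, constant J, differentiable functions b, H on I
and positive function h on I with H ≠ 0 on I such that, setting
a(t) = 2(J·H(t) − 1)/H(t), one has b' = h·b·(8J − 5a), H' = 2h(1 − H(4J − 3a)) and
b²·H + 6/H + 3J = 0 on I. -/
theorem no_solution_case_alpha_eq_a :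
    ¬ ∃ (I : Set ℝ) (J : ℝ) (b H h : ℝ → ℝ),
      IsOpen I ∧ I.Nonempty ∧ I.OrdConnected ∧
      (∀ t ∈ I, 0 < h t) ∧ (∀ t ∈ I, H t ≠ 0) ∧
      (∀ t ∈ I, HasDerivAt b
        (h t * b t * (8 * J - 5 * (2 * (J * H t - 1) / H t))) t) ∧
      (∀ t ∈ I, HasDerivAt H
        (2 * h t * (1 - H t * (4 * J - 3 * (2 * (J * H t - 1) / H t)))) t) ∧
      (∀ t ∈ I, (b t) ^ 2 * H t + 6 / H t + 3 * J = 0) := by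
  rintro ⟨I, J, b, H, h, hI, ⟨t, ht⟩, -, hpos, hH₀, hb, hH, hcon⟩
  have hvanish : (fun _ => (0 : ℝ)) =ᶠ[𝓝 t] fun s => b s ^ 2 * H s + 6 / H s + 3 * J := by
    filter_upwards [hI.mem_nhds ht] with s hs
    exact (hcon s hs).symm
  have hderiv := (((hb t ht).sq_mul_add_div_add 6 (3 * J) (hH t ht) (hH₀ t ht)
    ).congr_of_eventuallyEq hvanish).unique (hasDerivAt_const t 0)
  rw [constraint_deriv_eq (hH₀ t ht), div_eq_zero_iff, mul_eq_zero] at hderiv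
  have hquad : 5 * b t ^ 2 * H t ^ 2 - 12 * J * H t + 30 = 0 := by
    rcases hderiv with (htwo | hquad) | hH2
    · linarith [hpos t ht]
    · exact hquad
    · exact absurd hH2 (pow_ne_zero 2 (hH₀ t ht))
  linarith [sq_mul_eq_neg_six (hH₀ t ht) (hcon t ht) hquad, sq_nonneg (b t * H t)]
end

section
/- Let a, b, c be pairwise distinct real numbers, set P = a² + b² + c² − ab − ac − bc, and let Γ ∈ ℝ satisfy c/2 − ((a + b − 2c)/((a − b)(b − c)))·Γ = b/2 − ((a + c − 2b)/((b − c)(c − a)))·Γ. Then ((c − a)/(b − a))·Γ = −(a − c)²(b − c)²/(4P) < 0; in particular, there is no real number x with x² = ((c − a)/(b − a))·Γ. -/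
/-!
Clearing denominators, the hypothesis is linear in `Γ` with coefficient
`-2P / ((a - b)(b - c)(c - a))`, where `2P = (a - b)² + (a - c)² + (b - c)²`. Solving gives
`4PΓ = (a - b)(b - c)²(c - a)`, so `((c - a)/(b - a))Γ = -(a - c)²(b - c)²/(4P)`, which is
negative since `P > 0`; hence it is not a square.
-/

section Field

variable {K : Type*} [Field K]

def halfSumSqDiff (a b c : K) : K := a ^ 2 + b ^ 2 + c ^ 2 - a * b - a * c - b * c

lemma two_mul_halfSumSqDiff (a b c : K) :
    2 * halfSumSqDiff a b c = (a - b) ^ 2 + (a - c) ^ 2 + (b - c) ^ 2 := by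
  unfold halfSumSqDiff; ring

lemma halfSumSqDiff_pos [LinearOrder K] [IsStrictOrderedRing K] {a b : K} (c : K) (hab : a ≠ b) :
    0 < halfSumSqDiff a b c := by
  have hab' : 0 < (a - b) ^ 2 := sq_pos_of_ne_zero (sub_ne_zero.2 hab)
  have : 0 < 2 * halfSumSqDiff a b c := by
    rw [two_mul_halfSumSqDiff]; positivity
  linarith

variable [CharZero K] {a b c Γ : K}

lemma four_mul_halfSumSqDiff_mul_eq (hab : a ≠ b) (hac : a ≠ c) (hbc : b ≠ c)
    (hΓ : c / 2 - ((a + b - 2 * c) / ((a - b) * (b - c))) * Γ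
        = b / 2 - ((a + c - 2 * b) / ((b - c) * (c - a))) * Γ) :
    4 * halfSumSqDiff a b c * Γ = (a - b) * (b - c) ^ 2 * (c - a) := by
  have hab' := sub_ne_zero.2 hab
  have hca' := sub_ne_zero.2 hac.symm
  have hbc' := sub_ne_zero.2 hbc
  field_simp at hΓ
  unfold halfSumSqDiff
  linear_combination hΓ

lemma sub_div_sub_mul_eq (hab : a ≠ b) (hac : a ≠ c) (hbc : b ≠ c)
    (hΓ : c / 2 - ((a + b - 2 * c) / ((a - b) * (b - c))) * Γ
        = b / 2 - ((a + c - 2 * b) / ((b - c) * (c - a))) * Γ) :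
    (c - a) / (b - a) * Γ = -((a - c) ^ 2 * (b - c) ^ 2) / (4 * halfSumSqDiff a b c) := by
  have key := four_mul_halfSumSqDiff_mul_eq hab hac hbc hΓ
  -- Over a general field `P` can vanish for distinct `a, b, c`, but `key` rules that out.
  have hP : halfSumSqDiff a b c ≠ 0 := by
    intro hP
    simp [hP, sub_eq_zero, hab, hac.symm, hbc] at key
  rw [div_mul_eq_mul_div, div_eq_div_iff (sub_ne_zero.2 hab.symm) (by simpa using hP)]
  linear_combination (c - a) * key

end Field

/-- Let a, b, c be pairwise distinct reals, P = a² + b² + c² − ab − ac − bc, and let Γ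
satisfy c/2 − ((a+b−2c)/((a−b)(b−c)))·Γ = b/2 − ((a+c−2b)/((b−c)(c−a)))·Γ.  Then
((c−a)/(b−a))·Γ = −(a−c)²(b−c)²/(4P) < 0; in particular no real x satisfies
x² = ((c−a)/(b−a))·Γ. -/
theorem Gamma_ratio_negative (a b c Γ : ℝ) (hab : a ≠ b) (hac : a ≠ c) (hbc : b ≠ c)
    (hΓ : c / 2 - ((a + b - 2 * c) / ((a - b) * (b - c))) * Γ
        = b / 2 - ((a + c - 2 * b) / ((b - c) * (c - a))) * Γ) :
    ((c - a) / (b - a)) * Γ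
        = -((a - c) ^ 2 * (b - c) ^ 2)
          / (4 * (a ^ 2 + b ^ 2 + c ^ 2 - a * b - a * c - b * c)) ∧
    ((c - a) / (b - a)) * Γ < 0 ∧
    ¬ ∃ x : ℝ, x ^ 2 = ((c - a) / (b - a)) * Γ := by
  have heq := sub_div_sub_mul_eq hab hac hbc hΓ
  have hneg : (c - a) / (b - a) * Γ < 0 := by
    have hac' := sub_ne_zero.2 hac
    have hbc' := sub_ne_zero.2 hbc
    have hP := halfSumSqDiff_pos c hab
    rw [heq]
    exact div_neg_of_neg_of_pos (neg_neg_of_pos (by positivity)) (by positivity)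
  exact ⟨heq, hneg, fun ⟨x, hx⟩ => (sq_nonneg x).not_gt (hx ▸ hneg)⟩
end

section
/- Let n ≥ 2 be an integer, ε ∈ {−1, 1}, τ ∈ ℝ, and I ⊆ ℝ a nonempty open interval. Let h : I → ℝ be twice differentiable with h(t) > 0 for all t, and φ : I → ℝ be three times differentiable with φ(t) > 0 for all t, satisfying on I the two equations h'·φ' = h·φ'' and h'' + (n − 1)·h·φ''/φ + ε·τ·h/(n − 1) = 0. Then the function t ↦ φ(t)^{n−1}·φ''(t) + (ετ/(n(n − 1)))·φ(t)ⁿ is constant on I. -/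
/-! Differentiating `h'φ' = hφ''` gives `hφ''' = h''φ'`, so `φ'''` can be eliminated through the
second equation: multiplied by `h`, the derivative of `φⁿ⁻¹φ'' + (ετ/(n(n-1)))φⁿ` is
`φⁿ⁻¹φ'` times the second equation, hence it vanishes on the connected set `I`. -/

open Filter Topology

theorem exists_eq_const_of_hasDerivAt_zero {s : Set ℝ} {f : ℝ → ℝ} (hs : IsOpen s)
    (hs' : IsPreconnected s) (hf : ∀ x ∈ s, HasDerivAt f 0 x) : ∃ a, ∀ x ∈ s, f x = a :=
  hs.exists_is_const_of_deriv_eq_zero hs'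
    (fun x hx => (hf x hx).differentiableAt.differentiableWithinAt) fun x hx => (hf x hx).deriv

theorem hasDerivAt_pow_pred_mul_add_const_mul_pow {f f' g g' : ℝ → ℝ} {x : ℝ} {n : ℕ}
    (hn : 2 ≤ n) (c : ℝ) (hf : HasDerivAt f (f' x) x) (hg : HasDerivAt g (g' x) x) :
    HasDerivAt (fun y => f y ^ (n - 1) * g y + c * f y ^ n)
      (f x ^ (n - 2) * (((n : ℝ) - 1) * f' x * g x + f x * (g' x + n * c * f' x))) x := by
  obtain ⟨k, rfl⟩ : ∃ k, n = k + 2 := ⟨n - 2, by omega⟩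
  refine (((hf.pow (k + 1)).mul hg).add ((hf.pow (k + 2)).const_mul c)).congr_deriv ?_
  simp only [Pi.pow_apply]
  push_cast
  ring

theorem mul_deriv_eq_of_eventually_deriv_mul_eq {a a' a'' b b' b'' : ℝ → ℝ} {t : ℝ}
    (ha : HasDerivAt a (a' t) t) (ha' : HasDerivAt a' (a'' t) t)
    (hb : HasDerivAt b (b' t) t) (hb' : HasDerivAt b' (b'' t) t)
    (heq : ∀ᶠ s in 𝓝 t, a' s * b s = a s * b' s) :
    a t * b'' t = a'' t * b t := by
  have := ((ha'.mul hb).congr_of_eventuallyEq (heq.mono fun _ hs => hs.symm)).unique (ha.mul hb')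
  linarith

theorem first_integral_gamma_general
    (n : ℕ) (hn : 2 ≤ n) (ε τ : ℝ)
    (I : Set ℝ) (hIopen : IsOpen I) (hIconn : I.OrdConnected)
    (h h' h'' φ φ' φ'' φ''' : ℝ → ℝ)
    (hhpos : ∀ t ∈ I, 0 < h t) (hφpos : ∀ t ∈ I, 0 < φ t)
    (hdh : ∀ t ∈ I, HasDerivAt h (h' t) t)
    (hdh' : ∀ t ∈ I, HasDerivAt h' (h'' t) t)
    (hdφ : ∀ t ∈ I, HasDerivAt φ (φ' t) t)
    (hdφ' : ∀ t ∈ I, HasDerivAt φ' (φ'' t) t)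
    (hdφ'' : ∀ t ∈ I, HasDerivAt φ'' (φ''' t) t)
    (heq1 : ∀ t ∈ I, h' t * φ' t = h t * φ'' t)
    (heq2 : ∀ t ∈ I,
      h'' t + ((n : ℝ) - 1) * h t * φ'' t / φ t + ε * τ * h t / ((n : ℝ) - 1) = 0) :
    ∃ γ : ℝ, ∀ t ∈ I,
      φ t ^ (n - 1) * φ'' t + (ε * τ / ((n : ℝ) * ((n : ℝ) - 1))) * φ t ^ n = γ := by
  refine exists_eq_const_of_hasDerivAt_zero hIopen hIconn.isPreconnected fun t ht => ?_
  have hφ''' : h t * φ''' t = h'' t * φ' t :=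
    mul_deriv_eq_of_eventually_deriv_mul_eq (hdh t ht) (hdh' t ht) (hdφ' t ht) (hdφ'' t ht)
      (eventually_of_mem (hIopen.mem_nhds ht) heq1)
  have hn₀ : (n : ℝ) ≠ 0 := by positivity
  have hn₁ : (n : ℝ) - 1 ≠ 0 := by
    have : (2 : ℝ) ≤ n := by exact_mod_cast hn
    linarith
  set c := ε * τ / ((n : ℝ) * ((n : ℝ) - 1)) with hc
  have hnc : n * c = ε * τ / ((n : ℝ) - 1) := by rw [hc]; field_simp
  have hbracket : ((n : ℝ) - 1) * φ' t * φ'' t + φ t * (φ''' t + n * c * φ' t) = 0 := by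
    have hode := heq2 t ht
    refine (mul_eq_zero.1 (?_ : h t * _ = 0)).resolve_left (hhpos t ht).ne'
    have hφ := (hφpos t ht).ne'
    rw [hnc]
    field_simp at hode ⊢
    linear_combination φ' t * hode + ((n : ℝ) - 1) * φ t * hφ'''
  convert hasDerivAt_pow_pred_mul_add_const_mul_pow (f' := φ') (g' := φ''') hn c
    (hdφ t ht) (hdφ'' t ht) using 1
  rw [hbracket, mul_zero]

/-- For an n-dimensional (n ≥ 2) locally conformally flat warped product solution of the
vacuum weighted Einstein field equations, given by the ODE system
h'φ' = hφ'' and h'' + (n−1)hφ''/φ + ετh/(n−1) = 0 on a nonempty open interval I,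
the quantity φ^{n−1}φ'' + (ετ/(n(n−1)))φⁿ is constant on I. -/
theorem first_integral_gamma
    (n : ℕ) (hn : 2 ≤ n) (ε τ : ℝ) (hε : ε = -1 ∨ ε = 1)
    (I : Set ℝ) (hIopen : IsOpen I) (hIne : I.Nonempty) (hIconn : I.OrdConnected)
    (h h' h'' φ φ' φ'' φ''' : ℝ → ℝ)
    (hhpos : ∀ t ∈ I, 0 < h t) (hφpos : ∀ t ∈ I, 0 < φ t)
    (hdh : ∀ t ∈ I, HasDerivAt h (h' t) t)
    (hdh' : ∀ t ∈ I, HasDerivAt h' (h'' t) t)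
    (hdφ : ∀ t ∈ I, HasDerivAt φ (φ' t) t)
    (hdφ' : ∀ t ∈ I, HasDerivAt φ' (φ'' t) t)
    (hdφ'' : ∀ t ∈ I, HasDerivAt φ'' (φ''' t) t)
    (heq1 : ∀ t ∈ I, h' t * φ' t = h t * φ'' t)
    (heq2 : ∀ t ∈ I,
      h'' t + ((n : ℝ) - 1) * h t * φ'' t / φ t + ε * τ * h t / ((n : ℝ) - 1) = 0) :
    ∃ γ : ℝ, ∀ t ∈ I,
      φ t ^ (n - 1) * φ'' t + (ε * τ / ((n : ℝ) * ((n : ℝ) - 1))) * φ t ^ n = γ :=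
  first_integral_gamma_general n hn ε τ I hIopen hIconn h h' h'' φ φ' φ'' φ''' hhpos hφpos hdh hdh'
    hdφ hdφ' hdφ'' heq1 heq2
end

section
/- Let n ≥ 3 be an integer, ε ∈ {−1, 1}, τ ∈ ℝ, γ ∈ ℝ, and I ⊆ ℝ a nonempty open interval. Let φ : I → ℝ be twice differentiable with φ(t) > 0 for all t and suppose φ(t)^{n−1}·φ''(t) + (ετ/(n(n − 1)))·φ(t)ⁿ = γ for all t ∈ I. Then the function t ↦ φ'(t)² + (2γ/(n − 2))·φ(t)^{2−n} + (ετ/(n(n − 1)))·φ(t)² is constant on I. -/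
/-- If φ > 0 on a nonempty open interval I satisfies
φ^{n−1}φ'' + (ετ/(n(n−1)))φⁿ = γ (n ≥ 3), then
φ'² + (2γ/(n−2))·φ^{2−n} + (ετ/(n(n−1)))·φ² is constant on I. -/
theorem second_integral_kappa
    (n : ℕ) (hn : 3 ≤ n) (ε τ γ : ℝ) (hε : ε = -1 ∨ ε = 1)
    (I : Set ℝ) (hIopen : IsOpen I) (hIne : I.Nonempty) (hIconn : I.OrdConnected)
    (φ φ' φ'' : ℝ → ℝ) (hφpos : ∀ t ∈ I, 0 < φ t)
    (hdφ : ∀ t ∈ I, HasDerivAt φ (φ' t) t)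
    (hdφ' : ∀ t ∈ I, HasDerivAt φ' (φ'' t) t)
    (heq : ∀ t ∈ I,
      φ t ^ (n - 1) * φ'' t + (ε * τ / ((n : ℝ) * ((n : ℝ) - 1))) * φ t ^ n = γ) :
    ∃ c : ℝ, ∀ t ∈ I,
      (φ' t) ^ 2 + (2 * γ / ((n : ℝ) - 2)) * φ t ^ ((2 : ℤ) - (n : ℤ))
        + (ε * τ / ((n : ℝ) * ((n : ℝ) - 1))) * (φ t) ^ 2 = c := by
  set a : ℝ := ε * τ / ((n : ℝ) * ((n : ℝ) - 1)) with ha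
  set b : ℝ := 2 * γ / ((n : ℝ) - 2) with hb
  set F : ℝ → ℝ := fun t => (φ' t) ^ 2 + b * φ t ^ ((2 : ℤ) - (n : ℤ)) + a * (φ t) ^ 2 with hF
  have hn3 : (3 : ℝ) ≤ (n : ℝ) := by exact_mod_cast hn
  have hn2 : (n : ℝ) - 2 ≠ 0 := by linarith
  -- second derivative relation
  have hkey : ∀ t ∈ I, φ'' t = γ * φ t ^ ((1 : ℤ) - n) - a * φ t := by
    intro t ht
    have hp : φ t ≠ 0 := (hφpos t ht).ne'
    have hc : ((n - 1 : ℕ) : ℤ) = (n : ℤ) - 1 := by omega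
    have h1 : φ t ^ (n - 1) * φ t ^ ((1 : ℤ) - n) = 1 := by
      rw [← zpow_natCast (φ t) (n - 1), ← zpow_add₀ hp, hc]
      norm_num
    have h2 : φ t ^ n * φ t ^ ((1 : ℤ) - n) = φ t := by
      rw [← zpow_natCast (φ t) n, ← zpow_add₀ hp]
      norm_num
    have := congrArg (· * φ t ^ ((1 : ℤ) - n)) (heq t ht)
    rw [add_mul, mul_assoc, mul_comm (φ'' t), ← mul_assoc, h1, one_mul, mul_assoc, h2] at this
    linarith
  -- F has zero derivative on I
  have hF0 : ∀ t ∈ I, HasDerivAt F 0 t := by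
    intro t ht
    have hp : φ t ≠ 0 := (hφpos t ht).ne'
    have d1 : HasDerivAt (fun x => (φ' x) ^ 2) (2 * φ' t ^ 1 * φ'' t) t :=
      (hdφ' t ht).pow 2
    have d2 : HasDerivAt (fun x => φ x ^ ((2 : ℤ) - (n : ℤ)))
        ((Int.cast ((2:ℤ) - (n : ℤ)) : ℝ) * φ t ^ (((2 : ℤ) - (n : ℤ)) - 1) * φ' t) t :=
      (hasDerivAt_zpow ((2 : ℤ) - (n : ℤ)) (φ t) (Or.inl hp)).comp t (hdφ t ht)
    have d3 : HasDerivAt (fun x => (φ x) ^ 2) (2 * φ t ^ 1 * φ' t) t :=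
      (hdφ t ht).pow 2
    have hD : HasDerivAt F
        (2 * φ' t ^ 1 * φ'' t
          + b * ((Int.cast ((2:ℤ) - (n : ℤ)) : ℝ) * φ t ^ (((2 : ℤ) - (n : ℤ)) - 1) * φ' t)
          + a * (2 * φ t ^ 1 * φ' t)) t :=
      (d1.add (d2.const_mul b)).add (d3.const_mul a)
    have he : ((2 : ℤ) - (n : ℤ)) - 1 = (1 : ℤ) - n := by ring
    have hbm : b * (Int.cast ((2:ℤ) - (n : ℤ)) : ℝ) = -(2 * γ) := by
      rw [hb]
      push_cast
      field_simp
      ring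
    have hzero : 2 * φ' t ^ 1 * φ'' t
          + b * ((Int.cast ((2:ℤ) - (n : ℤ)) : ℝ) * φ t ^ (((2 : ℤ) - (n : ℤ)) - 1) * φ' t)
          + a * (2 * φ t ^ 1 * φ' t) = 0 := by
      rw [he, hkey t ht, pow_one, pow_one]
      have : b * ((Int.cast ((2:ℤ) - (n : ℤ)) : ℝ) * φ t ^ ((1 : ℤ) - n) * φ' t)
          = -(2 * γ) * (φ t ^ ((1 : ℤ) - n) * φ' t) := by
        rw [← hbm]; ring
      rw [this]; ring
    rw [hzero] at hD
    exact hD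
  -- constancy
  obtain ⟨t₀, ht₀⟩ := hIne
  refine ⟨F t₀, fun t ht => ?_⟩
  have hconv : Convex ℝ I := convex_iff_ordConnected.mpr hIconn
  have hdiff : DifferentiableOn ℝ F I := fun x hx =>
    ((hF0 x hx).differentiableAt).differentiableWithinAt
  have hfd : ∀ x ∈ I, fderivWithin ℝ F I x = 0 := by
    intro x hx
    rw [fderivWithin_of_isOpen hIopen hx]
    rw [(hF0 x hx).hasFDerivAt.fderiv]
    ext : 1; simp
  exact hconv.is_const_of_fderivWithin_eq_zero hdiff hfd ht ht₀
end

section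
/- Let I ⊆ ℝ be a nonempty open interval and φ : I → ℝ twice differentiable with φ(t) > 0 and φ'(t) ≠ 0 for all t ∈ I, satisfying φ'(t)² + 2·φ(t)·φ''(t) = 0 for all t ∈ I. Then the function t ↦ φ(t)·φ'(t)² is equal to a positive constant on I, and there exist K > 0 and t₀ ∈ ℝ with t₀ ∉ I such that φ(t) = K·|t − t₀|^{2/3} for all t ∈ I. -/
/-- A function whose derivative vanishes on an ord-connected set is constant there. -/
lemma aux_const_of_deriv_zero (I : Set ℝ) (hIconn : I.OrdConnected)
    (f f' : ℝ → ℝ) (hd : ∀ t ∈ I, HasDerivAt f (f' t) t) (h0 : ∀ t ∈ I, f' t = 0) :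
    ∀ s ∈ I, ∀ t ∈ I, f s = f t := by
  have key : ∀ a ∈ I, ∀ b ∈ I, a ≤ b → f b = f a := by
    intro a ha b hb hab
    have hsub : Set.Icc a b ⊆ I := hIconn.out ha hb
    have hcont : ContinuousOn f (Set.Icc a b) := fun x hx =>
      ((hd x (hsub hx)).continuousAt).continuousWithinAt
    have hderiv : ∀ x ∈ Set.Ico a b, HasDerivWithinAt f 0 (Set.Ici x) x := by
      intro x hx
      have hxI : x ∈ I := hsub ⟨hx.1, hx.2.le⟩
      have := (hd x hxI).hasDerivWithinAt (s := Set.Ici x)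
      rwa [h0 x hxI] at this
    exact constant_of_has_deriv_right_zero hcont hderiv b ⟨hab, le_rfl⟩
  intro s hs t ht
  rcases le_total s t with h | h
  · exact (key s hs t ht h).symm
  · exact key t ht s hs h

/-- If φ > 0 is twice differentiable on a nonempty open interval I with φ' nonvanishing
and (φ')² + 2φφ'' = 0 on I, then φ·(φ')² is a positive constant on I and
φ(t) = K·|t − t₀|^{2/3} for some K > 0 and some t₀ ∉ I. -/
theorem phi_two_thirds_power
    (I : Set ℝ) (hIopen : IsOpen I) (hIne : I.Nonempty) (hIconn : I.OrdConnected)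
    (φ φ' φ'' : ℝ → ℝ)
    (hφpos : ∀ t ∈ I, 0 < φ t) (hφ'ne : ∀ t ∈ I, φ' t ≠ 0)
    (hdφ : ∀ t ∈ I, HasDerivAt φ (φ' t) t)
    (hdφ' : ∀ t ∈ I, HasDerivAt φ' (φ'' t) t)
    (heq : ∀ t ∈ I, (φ' t) ^ 2 + 2 * φ t * φ'' t = 0) :
    (∃ c : ℝ, 0 < c ∧ ∀ t ∈ I, φ t * (φ' t) ^ 2 = c) ∧
    (∃ K : ℝ, 0 < K ∧ ∃ t₀ : ℝ, t₀ ∉ I ∧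
      ∀ t ∈ I, φ t = K * |t - t₀| ^ ((2 : ℝ) / 3)) := by
  obtain ⟨t₁, ht₁⟩ := hIne
  set c : ℝ := φ t₁ * (φ' t₁) ^ 2 with hc_def
  have hc : 0 < c := mul_pos (hφpos t₁ ht₁) (pow_pos (abs_pos.mpr (hφ'ne t₁ ht₁)) 2 |>.trans_le (by rw [sq_abs]))
  -- Step 1: φ·(φ')² is constant equal to c
  have hgconst : ∀ t ∈ I, φ t * (φ' t) ^ 2 = c := by
    have hd : ∀ t ∈ I, HasDerivAt (fun t => φ t * (φ' t) ^ 2)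
        (φ' t * (φ' t) ^ 2 + φ t * (2 * φ' t ^ 1 * φ'' t)) t := fun t ht =>
      (hdφ t ht).mul ((hdφ' t ht).pow 2)
    have h0 : ∀ t ∈ I, φ' t * (φ' t) ^ 2 + φ t * (2 * φ' t ^ 1 * φ'' t) = 0 := by
      intro t ht
      have := heq t ht
      linear_combination φ' t * this
    intro t ht
    exact aux_const_of_deriv_zero I hIconn _ _ hd h0 t ht t₁ ht₁
  refine ⟨⟨c, hc, hgconst⟩, ?_⟩
  -- continuity of φ' on I
  have hcontφ' : ContinuousOn φ' I := fun t ht => (hdφ' t ht).continuousAt.continuousWithinAt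
  -- Step 2: φ' has constant sign on I
  have hsign : (∀ t ∈ I, 0 < φ' t) ∨ (∀ t ∈ I, φ' t < 0) := by
    by_contra h
    push_neg at h
    obtain ⟨⟨a, ha, ha'⟩, ⟨b, hb, hb'⟩⟩ := h
    have ha2 : φ' a < 0 := lt_of_le_of_ne ha' (hφ'ne a ha)
    have hb2 : 0 < φ' b := lt_of_le_of_ne hb' (Ne.symm (hφ'ne b hb))
    rcases le_total a b with hab | hab
    · have hsub : Set.Icc a b ⊆ I := hIconn.out ha hb
      have := intermediate_value_Icc hab (hcontφ'.mono hsub)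
      obtain ⟨x, hx, hx0⟩ := this ⟨ha2.le, hb2.le⟩
      exact hφ'ne x (hsub hx) hx0
    · have hsub : Set.Icc b a ⊆ I := hIconn.out hb ha
      have := intermediate_value_Icc' hab (hcontφ'.mono hsub)
      obtain ⟨x, hx, hx0⟩ := this ⟨ha2.le, hb2.le⟩
      exact hφ'ne x (hsub hx) hx0
  -- the derivative of ψ := φ^(3/2)
  have hdψ : ∀ t ∈ I, HasDerivAt (fun t => φ t ^ ((3 : ℝ) / 2))
      (φ' t * ((3 : ℝ) / 2) * φ t ^ ((3 : ℝ) / 2 - 1)) t := fun t ht =>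
    (hdφ t ht).rpow_const (Or.inl (ne_of_gt (hφpos t ht)))
  -- the derivative value a t := φ' t * (3/2) * φ t ^ (1/2) satisfies (a t)² = (9/4)c
  have hsq12 : ∀ t ∈ I, (φ t ^ ((3 : ℝ) / 2 - 1)) ^ 2 = φ t := by
    intro t ht
    have h1 : (3 : ℝ) / 2 - 1 = 1 / 2 := by norm_num
    rw [h1, ← Real.sqrt_eq_rpow, Real.sq_sqrt (hφpos t ht).le]
  have hasq : ∀ t ∈ I,
      (φ' t * ((3 : ℝ) / 2) * φ t ^ ((3 : ℝ) / 2 - 1)) ^ 2 = 9 / 4 * c := by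
    intro t ht
    have h1 := hsq12 t ht
    have h2 := hgconst t ht
    nlinarith [h1, h2]
  have hsqrtc : 0 < Real.sqrt c := Real.sqrt_pos.mpr hc
  have hsqc : (Real.sqrt c) ^ 2 = c := Real.sq_sqrt hc.le
  -- fix the sign ε
  obtain hpos | hneg := hsign
  case' inl => set ε : ℝ := 1 with hε_def
  case' inr => set ε : ℝ := -1 with hε_def
  all_goals {
    first
    | (have haval : ∀ t ∈ I, φ' t * ((3 : ℝ) / 2) * φ t ^ ((3 : ℝ) / 2 - 1)
          = ε * (3 / 2 * Real.sqrt c) := by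
        intro t ht
        have hφ't := hpos t ht
        have hpow : 0 < φ t ^ ((3 : ℝ) / 2 - 1) := Real.rpow_pos_of_pos (hφpos t ht) _
        have h1 := hasq t ht
        have ha0 : 0 < φ' t * ((3 : ℝ) / 2) * φ t ^ ((3 : ℝ) / 2 - 1) := by positivity
        rw [hε_def]
        nlinarith [h1, hsqc, ha0, hsqrtc])
    | (have haval : ∀ t ∈ I, φ' t * ((3 : ℝ) / 2) * φ t ^ ((3 : ℝ) / 2 - 1)
          = ε * (3 / 2 * Real.sqrt c) := by
        intro t ht
        have hφ't := hneg t ht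
        have hpow : 0 < φ t ^ ((3 : ℝ) / 2 - 1) := Real.rpow_pos_of_pos (hφpos t ht) _
        have h1 := hasq t ht
        have ha0 : φ' t * ((3 : ℝ) / 2) * φ t ^ ((3 : ℝ) / 2 - 1) < 0 := by
          have : 0 < (3 : ℝ) / 2 * φ t ^ ((3 : ℝ) / 2 - 1) := by positivity
          nlinarith
        rw [hε_def]
        nlinarith [h1, hsqc, ha0, hsqrtc])
    -- d ≠ 0
    set d : ℝ := ε * (3 / 2 * Real.sqrt c) with hd_def
    have hdne : d ≠ 0 := by
      rw [hd_def, hε_def]; positivity <;> nlinarith [hsqrtc]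
    -- ψ - d·t is constant
    have hF : ∀ t ∈ I, HasDerivAt (fun t => φ t ^ ((3 : ℝ) / 2) - d * t)
        (φ' t * ((3 : ℝ) / 2) * φ t ^ ((3 : ℝ) / 2 - 1) - d) t := by
      intro t ht
      have h2 : HasDerivAt (fun t : ℝ => d * t) d t := by
        simpa using (hasDerivAt_id t).const_mul d
      exact (hdψ t ht).sub h2
    have hF0 : ∀ t ∈ I, φ' t * ((3 : ℝ) / 2) * φ t ^ ((3 : ℝ) / 2 - 1) - d = 0 := by
      intro t ht; rw [haval t ht, hd_def]; ring
    set B : ℝ := φ t₁ ^ ((3 : ℝ) / 2) - d * t₁ with hB_def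
    have haff : ∀ t ∈ I, φ t ^ ((3 : ℝ) / 2) = d * t + B := by
      intro t ht
      have := aux_const_of_deriv_zero I hIconn _ _ hF hF0 t ht t₁ ht₁
      rw [hB_def]; linarith [this]
    set t₀ : ℝ := -B / d with ht₀_def
    have ht₀ : ∀ t ∈ I, φ t ^ ((3 : ℝ) / 2) = d * (t - t₀) := by
      intro t ht
      rw [haff t ht, ht₀_def]
      field_simp
      ring
    have ht₀notI : t₀ ∉ I := by
      intro hmem
      have h1 := ht₀ t₀ hmem
      have h2 : 0 < φ t₀ ^ ((3 : ℝ) / 2) := Real.rpow_pos_of_pos (hφpos t₀ hmem) _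
      rw [h1] at h2; simp at h2
    refine ⟨|d| ^ ((2 : ℝ) / 3), Real.rpow_pos_of_pos (abs_pos.mpr hdne) _, t₀, ht₀notI, ?_⟩
    intro t ht
    have h1 := ht₀ t ht
    have h2 : 0 < d * (t - t₀) := by
      rw [← h1]; exact Real.rpow_pos_of_pos (hφpos t ht) _
    have h3 : φ t = (d * (t - t₀)) ^ ((2 : ℝ) / 3) := by
      rw [← h1, ← Real.rpow_mul (hφpos t ht).le]
      norm_num
    rw [h3]
    have h4 : d * (t - t₀) = |d| * |t - t₀| := by
      rw [← abs_mul]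
      exact (abs_of_pos h2).symm
    rw [h4, Real.mul_rpow (abs_nonneg d) (abs_nonneg _)]
  }
end
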